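/- If λ ≥ λ̂₁ then the Robin problem −Δu + ξ(z)u = λu + f(z,u) in Ω, ∂u/∂n + β(z)u = 0 on ∂Ω, has no positive solution, provided f(z,x) > 0 for a.e. z ∈ Ω and all x > 0. -/
import Mathlib


open MeasureTheory

private lemma pos_of_compl_null {Ω : Type*} [MeasurableSpace Ω] {μ : Measure Ω}
    (hμ : μ ≠ 0) {s : Set Ω} (h : μ sᶜ = 0) : 0 < μ s := by
  rcases eq_or_ne (μ s) 0 with h0 | h0
  · exfalso
    apply hμ
    ext t ht
    have : μ Set.univ ≤ μ s + μ sᶜ := by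
      rw [← Set.union_compl_self s]; exact measure_union_le _ _
    rw [h0, h, add_zero] at this
    have huniv : μ Set.univ = 0 := le_antisymm this bot_le
    simp [measure_mono_null (Set.subset_univ t) huniv]
  · exact h0.bot_lt

/-- **Nonexistence for `λ ≥ λ̂₁`.** If `λ ≥ λ̂₁`, then the Robin problem
`-Δu + ξ(z)u = λu + f(z,u)` in `Ω`, `∂u/∂n + β(z)u = 0` on `∂Ω`, has no positive
solution, provided `f(z,x) > 0` for a.e. `z ∈ Ω` and all `x > 0`.  Here `a` is the
(symmetric) form `a(u,h) = ∫_Ω (Du,Dh) + ∫_Ω ξ u h + ∫_{∂Ω} β u h dσ` on the test space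
`S = H¹(Ω)`, `u1 = û₁ > 0` is a principal eigenfunction (`a(û₁,h) = λ̂₁ ∫ û₁ h` for all
`h`), and a positive solution `u > 0` satisfies `a(u,h) = ∫ (λu + f(z,u)) h` for all
`h ∈ S`.  Assuming such a solution exists yields a contradiction. -/
theorem no_positive_solution_above_principal_eigenvalue {Ω : Type*} [MeasurableSpace Ω]
    (μ : Measure Ω) (hμ : μ ≠ 0) (f : Ω → ℝ → ℝ)
    (a : (Ω → ℝ) → (Ω → ℝ) → ℝ) (S : Set (Ω → ℝ)) (lam1 lam : ℝ) (hlam : lam1 ≤ lam)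
    (u u1 : Ω → ℝ) (hu : u ∈ S) (hu1 : u1 ∈ S)
    (hsymm : a u u1 = a u1 u)
    (hupos : ∀ᵐ z ∂μ, 0 < u z) (hu1pos : ∀ᵐ z ∂μ, 0 < u1 z)
    (hfpos : ∀ᵐ z ∂μ, ∀ x : ℝ, 0 < x → 0 < f z x)
    (hsol : ∀ h ∈ S, a u h = ∫ z, (lam * u z + f z (u z)) * h z ∂μ)
    (heig : ∀ h ∈ S, a u1 h = lam1 * ∫ z, u1 z * h z ∂μ)
    (hint1 : Integrable (fun z => u z * u1 z) μ)
    (hint2 : Integrable (fun z => f z (u z) * u1 z) μ) :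
    False := by
  set I : ℝ := ∫ z, u z * u1 z ∂μ with hI
  set J : ℝ := ∫ z, f z (u z) * u1 z ∂μ with hJ
  have hIpos : 0 < I := by
    rw [hI, integral_pos_iff_support_of_nonneg_ae]
    · have hs : ∀ᵐ z ∂μ, z ∈ Function.support fun z => u z * u1 z := by
        filter_upwards [hupos, hu1pos] with z h1 h2
        exact (mul_pos h1 h2).ne'
      rw [Filter.eventually_iff_exists_mem] at hs
      obtain ⟨v, hv, hvsub⟩ := hs
      have hcn : μ (Function.support fun z => u z * u1 z)ᶜ = 0 := by
        refine measure_mono_null ?_ hv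
        intro z hz
        by_contra hzv
        exact hz (hvsub z (by simpa using hzv))
      exact pos_of_compl_null hμ hcn
    · filter_upwards [hupos, hu1pos] with z h1 h2 using (mul_pos h1 h2).le
    · exact hint1
  have hJpos : 0 < J := by
    rw [hJ, integral_pos_iff_support_of_nonneg_ae]
    · have hs : ∀ᵐ z ∂μ, z ∈ Function.support fun z => f z (u z) * u1 z := by
        filter_upwards [hupos, hu1pos, hfpos] with z h1 h2 h3
        exact (mul_pos (h3 _ h1) h2).ne'
      rw [Filter.eventually_iff_exists_mem] at hs
      obtain ⟨v, hv, hvsub⟩ := hs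
      have htot : μ Set.univ ≠ 0 := by simpa [Measure.measure_univ_eq_zero] using hμ
      have hcn : μ (Function.support fun z => f z (u z) * u1 z)ᶜ = 0 := by
        refine measure_mono_null ?_ hv
        intro z hz
        by_contra hzv
        exact hz (hvsub z (by simpa using hzv))
      exact pos_of_compl_null hμ hcn
    · filter_upwards [hupos, hu1pos, hfpos] with z h1 h2 h3 using (mul_pos (h3 _ h1) h2).le
    · exact hint2
  have h1 : a u u1 = lam * I + J := by
    rw [hsol u1 hu1]
    have : (fun z => (lam * u z + f z (u z)) * u1 z)
        = fun z => lam * (u z * u1 z) + f z (u z) * u1 z := by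
      funext z; ring
    rw [this, integral_add (hint1.const_mul lam) hint2, integral_const_mul]
  have h2 : a u1 u = lam1 * I := by
    rw [heig u hu, hI]
    congr 1
    exact integral_congr_ae (Filter.Eventually.of_forall fun z => mul_comm _ _)
  have key : lam * I + J = lam1 * I := by rw [← h1, ← h2, hsymm]
  have : lam1 * I ≤ lam * I := mul_le_mul_of_nonneg_right hlam hIpos.le
  linarith
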